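/- arXiv:1606.00667 — 3 statements merged into one kernel-verified Lean document; each statement's English description precedes it below -/
import Mathlib

section
/- Define an equivalence relation on finite multisets of cut points on the edges of a fixed 4-valent graph (a virtual link diagram D) generated by three moves: (I) insert or delete two adjacent cut points on the same edge, (II) cancel two cut points lying on adjacent edges across a virtual crossing (i.e., remove a pair of points separated only by a virtual crossing), and (III) simultaneously toggle one cut point on each of the four edges incident to a fixed classical crossing. Then any two cut systems of D (sets of points admitting an alternate orientation) are related by a finite sequence of these moves. -/
/-- A combinatorial model of a virtual link diagram.  `S` is the (finite) set of
edges (segments between consecutive crossing passages), `next` is the traversal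
successor along the underlying immersed curves, and the gap following an edge `s`
is either a classical crossing passage (`classicalGap s`) or a virtual crossing
passage (`virtualGap s`).  Classical crossings form a type `C`; crossing `c` is
passed twice, just after the edges `passes c 0` and `passes c 1`, so the four
edges incident to `c` are `passes c k` and `next (passes c k)` for `k = 0, 1`. -/
structure VDiagram where
  S : Type
  finS : Fintype S
  deceqS : DecidableEq S
  next : S ≃ S
  classicalGap : S → Bool
  virtualGap : S → Bool
  C : Type
  passes : C → Fin 2 → S
  passes_classical : ∀ c k, classicalGap (passes c k) = true
  classical_covered : ∀ s, classicalGap s = true → ∃ c k, passes c k = s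
  passes_inj : Function.Injective (fun p : C × Fin 2 => passes p.1 p.2)
  gaps_disjoint : ∀ s, ¬(classicalGap s = true ∧ virtualGap s = true)
  gaps_total : ∀ s, classicalGap s = true ∨ virtualGap s = true

/-- A cut system: a finite multiset of cut points on the edges of `D` admitting an
alternate orientation.  `o s` records (in `ZMod 2`) whether the alternate
orientation agrees with the traversal direction at the start of edge `s`; the
orientation reverses at each cut point and at each classical crossing, and at a
classical crossing the four incident edge-directions alternate in/out, i.e. the
two incoming strands carry opposite orientation values. -/
def IsCutSystem (D : VDiagram) (P : Multiset D.S) : Prop :=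
  letI := D.deceqS
  ∃ o : D.S → ZMod 2,
    (∀ s, o (D.next s) = o s + (P.count s : ZMod 2)
        + (if D.classicalGap s then 1 else 0)) ∧
    (∀ c : D.C,
      (o (D.passes c 0) + (P.count (D.passes c 0) : ZMod 2))
        + (o (D.passes c 1) + (P.count (D.passes c 1) : ZMod 2)) = 1)

/-- Dye's cut point moves.  Move I inserts or deletes a pair of adjacent cut
points on one edge.  Move II cancels a pair of cut points adjacent across a
virtual crossing.  Move III simultaneously toggles one cut point on each of the
four edges incident to a classical crossing. -/
def CutMove (D : VDiagram) (P P' : Multiset D.S) : Prop :=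
  (∃ s : D.S, P' = s ::ₘ s ::ₘ P ∨ P = s ::ₘ s ::ₘ P') ∨
  (∃ s : D.S, D.virtualGap s = true ∧
      (P' = s ::ₘ D.next s ::ₘ P ∨ P = s ::ₘ D.next s ::ₘ P')) ∨
  (∃ c : D.C,
      P' = D.passes c 0 ::ₘ D.next (D.passes c 0) ::ₘ
             D.passes c 1 ::ₘ D.next (D.passes c 1) ::ₘ P ∨
      P = D.passes c 0 ::ₘ D.next (D.passes c 0) ::ₘ
             D.passes c 1 ::ₘ D.next (D.passes c 1) ::ₘ P')

/-!
Two alternate orientations `o`, `o'` of `D` differ by the flip pattern `g = o + o'`, and comparing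
them along each edge shows that the cut-point parities of the two systems differ by
`g ∘ next + g`. At a classical crossing `g` agrees on the two outgoing edges, so `g` is a sum of
indicators of single edges just after a virtual crossing (whose parity change is the pair of
points of move II) and of outgoing pairs of classical crossings (whose parity change is the
quadruple of move III). Multisets with the same parities of counts differ by moves I only.
-/

namespace Multiset

variable {α : Type*} [DecidableEq α]

def countParity (P : Multiset α) : α → ZMod 2 := fun a => (P.count a : ZMod 2)

theorem countParity_cons (a : α) (P : Multiset α) :
    (a ::ₘ P).countParity = P.countParity + Pi.single a 1 := by
  funext b
  by_cases h : b = a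
  · subst h; simp [countParity]
  · simp [countParity, h]

theorem exists_count_eq [Fintype α] (n : α → ℕ) :
    ∃ P : Multiset α, ∀ a, P.count a = n a :=
  ⟨toFinsupp.symm (Finsupp.equivFunOnFinite.symm n), fun a => by
    simp [← toFinsupp_apply]⟩

theorem exists_countParity_eq [Fintype α] (f : α → ZMod 2) :
    ∃ P : Multiset α, P.countParity = f := by
  obtain ⟨P, hP⟩ := exists_count_eq fun a => (f a).val
  exact ⟨P, funext fun a => by simp [countParity, hP]⟩

end Multiset

namespace VDiagram

open Multiset Relation Submodule

variable {D : VDiagram}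

instance : Fintype D.S := D.finS

instance : DecidableEq D.S := D.deceqS

instance : Finite D.C :=
  Finite.of_injective (fun c => D.passes c 0) fun c c' h =>
    congrArg Prod.fst (@D.passes_inj (c, 0) (c', 0) h)

noncomputable instance : Fintype D.C := Fintype.ofFinite D.C

theorem cutMove_symm {P Q : Multiset D.S} : CutMove D P Q → CutMove D Q P := by
  rintro (⟨s, h | h⟩ | ⟨s, hv, h | h⟩ | ⟨c, h | h⟩)
  exacts [Or.inl ⟨s, Or.inr h⟩, Or.inl ⟨s, Or.inl h⟩, Or.inr (Or.inl ⟨s, hv, Or.inr h⟩),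
    Or.inr (Or.inl ⟨s, hv, Or.inl h⟩), Or.inr (Or.inr ⟨c, Or.inr h⟩),
    Or.inr (Or.inr ⟨c, Or.inl h⟩)]

instance : Std.Symm (CutMove D) := ⟨fun _ _ => cutMove_symm⟩

theorem reflTransGen_cutMove_add_add_self (A P : Multiset D.S) :
    ReflTransGen (CutMove D) P (A + A + P) := by
  induction A using Multiset.induction with
  | empty => simpa using ReflTransGen.refl
  | cons a A ih =>
    have h : a ::ₘ A + a ::ₘ A + P = a ::ₘ a ::ₘ (A + A + P) := by
      simp only [cons_add, add_cons]
    exact h ▸ ih.tail (Or.inl ⟨a, Or.inl rfl⟩)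

theorem reflTransGen_cutMove_of_countParity_eq {P Q : Multiset D.S}
    (h : P.countParity = Q.countParity) : ReflTransGen (CutMove D) P Q := by
  have hmod (s : D.S) : P.count s % 2 = Q.count s % 2 :=
    (ZMod.natCast_eq_natCast_iff' _ _ _).1 (congrFun h s)
  obtain ⟨A, hA⟩ := exists_count_eq fun s => (Q.count s - P.count s) / 2
  obtain ⟨B, hB⟩ := exists_count_eq fun s => (P.count s - Q.count s) / 2
  have hAB : A + A + P = B + B + Q := by
    ext s
    simp only [count_add, hA, hB]
    have := hmod s
    omega
  exact (reflTransGen_cutMove_add_add_self A P).trans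
    (hAB ▸ Std.Symm.symm _ _ (reflTransGen_cutMove_add_add_self B Q))

variable (D) in
/-- Reversing an alternate orientation exactly on the edges where `g = 1` changes the parity of the
cut points on `s` by `g (next s) + g s`. -/
def cutChange : (D.S → ZMod 2) →ₗ[ZMod 2] D.S → ZMod 2 :=
  LinearMap.funLeft (ZMod 2) (ZMod 2) D.next + LinearMap.id

theorem cutChange_apply (g : D.S → ZMod 2) (s : D.S) : D.cutChange g s = g (D.next s) + g s :=
  rfl

theorem cutChange_single (t : D.S) :
    D.cutChange (Pi.single t 1) = Pi.single (D.next.symm t) 1 + Pi.single t 1 := by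
  simp [cutChange, LinearMap.funLeft, ← Pi.single_comp_equiv]

variable (D) in
def elementaryFlips : Set (D.S → ZMod 2) :=
  {g | (∃ s, D.virtualGap s = true ∧ g = Pi.single (D.next s) 1) ∨
    ∃ c, g = Pi.single (D.next (D.passes c 0)) 1 + Pi.single (D.next (D.passes c 1)) 1}

theorem reflTransGen_cutMove_of_mem_span {g : D.S → ZMod 2}
    (hg : g ∈ span (ZMod 2) (elementaryFlips D)) {P Q : Multiset D.S}
    (h : Q.countParity = P.countParity + D.cutChange g) : ReflTransGen (CutMove D) P Q := by
  induction hg using span_induction generalizing P Q with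
  | mem g hg =>
    rcases hg with ⟨s, hs, rfl⟩ | ⟨c, rfl⟩
    · refine ReflTransGen.head (Or.inr (Or.inl ⟨s, hs, Or.inl rfl⟩))
        (reflTransGen_cutMove_of_countParity_eq ?_)
      rw [h, cutChange_single, Equiv.symm_apply_apply, countParity_cons, countParity_cons]
      abel
    · refine ReflTransGen.head (Or.inr (Or.inr ⟨c, Or.inl rfl⟩))
        (reflTransGen_cutMove_of_countParity_eq ?_)
      rw [h, _root_.map_add, cutChange_single, cutChange_single, Equiv.symm_apply_apply,
        Equiv.symm_apply_apply]
      simp only [countParity_cons]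
      abel
  | zero => exact reflTransGen_cutMove_of_countParity_eq (by simp [h])
  | add g₁ g₂ _ _ ih₁ ih₂ =>
    obtain ⟨R, hR⟩ := exists_countParity_eq (P.countParity + D.cutChange g₁)
    exact (ih₁ hR).trans (ih₂ (by rw [h, hR, _root_.map_add, add_assoc]))
  | smul a g _ ih =>
    obtain rfl | rfl : a = 0 ∨ a = 1 := by clear h; revert a; decide
    · exact reflTransGen_cutMove_of_countParity_eq (by simp [h])
    · exact ih (by simpa using h)

theorem filter_classicalGap_eq_image :
    Finset.univ.filter (fun s => D.classicalGap s = true) =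
      Finset.univ.image fun p : D.C × Fin 2 => D.passes p.1 p.2 := by
  ext s
  simp only [Finset.mem_filter, Finset.mem_univ, true_and, Finset.mem_image, Prod.exists]
  exact ⟨D.classical_covered s, fun ⟨c, k, hs⟩ => hs ▸ D.passes_classical c k⟩

theorem mem_span_elementaryFlips {g : D.S → ZMod 2}
    (hg : ∀ c, g (D.next (D.passes c 0)) = g (D.next (D.passes c 1))) :
    g ∈ span (ZMod 2) (elementaryFlips D) := by
  have hsum : g = ∑ s, g (D.next s) • Pi.single (D.next s) 1 := by
    conv_lhs => rw [← Finset.univ_sum_single g]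
    rw [Equiv.sum_comp D.next fun t => g t • Pi.single t (1 : ZMod 2)]
    simp only [← Pi.single_smul', smul_eq_mul, mul_one]
  rw [hsum, ← Finset.sum_filter_add_sum_filter_not Finset.univ fun s => D.classicalGap s = true,
    filter_classicalGap_eq_image, Finset.sum_image D.passes_inj.injOn, Fintype.sum_prod_type]
  refine add_mem (sum_mem fun c _ => ?_) (sum_mem fun s hs => ?_)
  · rw [Fin.sum_univ_two, hg c, ← smul_add]
    exact smul_mem _ _ (subset_span (Or.inr ⟨c, rfl⟩))
  · have hv : D.virtualGap s = true :=
      (D.gaps_total s).resolve_left (Finset.mem_filter.1 hs).2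
    exact smul_mem _ _ (subset_span (Or.inl ⟨s, hv, rfl⟩))

theorem exists_flip_of_isCutSystem {P P' : Multiset D.S} (hP : IsCutSystem D P)
    (hP' : IsCutSystem D P') :
    ∃ g : D.S → ZMod 2, (∀ c, g (D.next (D.passes c 0)) = g (D.next (D.passes c 1))) ∧
      P'.countParity = P.countParity + D.cutChange g := by
  obtain ⟨o, hnext, hcross⟩ := hP
  obtain ⟨o', hnext', hcross'⟩ := hP'
  refine ⟨o + o', fun c => ?_, funext fun s => ?_⟩
  · have h₀ := hnext (D.passes c 0)
    have h₁ := hnext (D.passes c 1)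
    have h₀' := hnext' (D.passes c 0)
    have h₁' := hnext' (D.passes c 1)
    simp only [D.passes_classical, if_true] at h₀ h₁ h₀' h₁'
    have := hcross c
    have := hcross' c
    simp only [Pi.add_apply]
    grind
  · have := hnext s
    have := hnext' s
    simp only [countParity, Pi.add_apply, cutChange_apply]
    grind

end VDiagram

/-- Any two cut systems of the same virtual link diagram are related by a finite
sequence of cut point moves I, II and III. -/
theorem cutSystems_related_by_cutMoves (D : VDiagram) (P P' : Multiset D.S)
    (hP : IsCutSystem D P) (hP' : IsCutSystem D P') :
    Relation.ReflTransGen (CutMove D) P P' := by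
  obtain ⟨g, hg, hPP'⟩ := VDiagram.exists_flip_of_isCutSystem hP hP'
  exact VDiagram.reflTransGen_cutMove_of_mem_span (VDiagram.mem_span_elementaryFlips hg) hPP'
end

section
/- Let G be the Gauss diagram of a virtual knot diagram D with a set P = {p_1, ..., p_{2n}} of 2n points (n ≥ 1) on the circle avoiding chord endpoints. Performing the double-covering replacement (gluing G and its mirror G* by swapping arcs at each pair of corresponding points p_i, p_i*) yields a Gauss diagram with exactly two circles; moreover, if the arc A_i (between p_i and p_{i+1}) lies on one circle, then A_{i+1} and the mirror arc A_i* lie on the other circle. -/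
/-- The arcs of the double covering of a Gauss diagram of a virtual knot diagram
with `2n` cut points: arc `(i, false)` is the arc `A_{i+1}` of `G` (from the cut
point `p_{i+1}` to `p_{i+2}`), and `(i, true)` is the mirror arc `A_{i+1}*` of
`G*`.  The crosswise reconnection at each pair of corresponding cut points makes
the successor of an arc the next arc on the *other* copy. -/
def coverSucc (n : ℕ) (x : ZMod (2 * n) × Bool) : ZMod (2 * n) × Bool :=
  (x.1 + 1, !x.2)

/-- Two arcs lie on the same circle of the reconnected diagram. -/
def SameComp (n : ℕ) (x y : ZMod (2 * n) × Bool) : Prop :=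
  ∃ k : ℕ, (coverSucc n)^[k] x = y ∨ (coverSucc n)^[k] y = x

/-- The invariant: parity class of an arc, constant on circles. -/
def fInv (n : ℕ) (x : ZMod (2 * n) × Bool) : ZMod 2 :=
  ZMod.castHom (dvd_mul_right 2 n) (ZMod 2) x.1 + (if x.2 then 1 else 0)

lemma fInv_step (n : ℕ) (x : ZMod (2 * n) × Bool) :
    fInv n (coverSucc n x) = fInv n x := by
  obtain ⟨i, b⟩ := x
  have h2 : (2 : ZMod 2) = 0 := by decide
  cases b <;> simp [fInv, coverSucc, map_add, map_one] <;> linear_combination h2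

lemma fInv_iterate (n k : ℕ) (x : ZMod (2 * n) × Bool) :
    fInv n ((coverSucc n)^[k] x) = fInv n x := by
  induction k with
  | zero => rfl
  | succ k ih => rw [Function.iterate_succ_apply', fInv_step, ih]

lemma iterate_coverSucc (n k : ℕ) (x : ZMod (2 * n) × Bool) :
    (coverSucc n)^[k] x = (x.1 + k, if Even k then x.2 else !x.2) := by
  induction k with
  | zero => simp
  | succ k ih =>
      rw [Function.iterate_succ_apply', ih]
      rcases Nat.even_or_odd k with h | h
      · have h1 : ¬ Even (k + 1) := by simp [Nat.even_add_one, h]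
        simp only [coverSucc, if_pos h, if_neg h1]
        refine Prod.ext ?_ rfl
        push_cast; ring
      · have h0 : ¬ Even k := Nat.not_even_iff_odd.mpr h
        have h1 : Even (k + 1) := by
          rcases h with ⟨m, hm⟩; exact ⟨m + 1, by omega⟩
        simp only [coverSucc, if_neg h0, if_pos h1, Bool.not_not]
        refine Prod.ext ?_ rfl
        push_cast; ring

lemma sameComp_iff (n : ℕ) (hn : 1 ≤ n) (x y : ZMod (2 * n) × Bool) :
    SameComp n x y ↔ fInv n x = fInv n y := by
  haveI : NeZero (2 * n) := ⟨by omega⟩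
  constructor
  · rintro ⟨k, h | h⟩
    · rw [← h, fInv_iterate]
    · rw [← h, fInv_iterate]
  · intro h
    set k := (y.1 - x.1).val with hk
    have h1 : (k : ZMod (2 * n)) = y.1 - x.1 := by
      simp [hk, ZMod.natCast_val, ZMod.cast_id]
    have h2 : (k : ZMod 2) = ZMod.castHom (dvd_mul_right 2 n) (ZMod 2) (y.1 - x.1) := by
      rw [← h1]; simp
    have h3 : ZMod.castHom (dvd_mul_right 2 n) (ZMod 2) (y.1 - x.1)
        = (if x.2 then (1 : ZMod 2) else 0) - (if y.2 then 1 else 0) := by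
      have hf := h
      unfold fInv at hf
      rw [map_sub]
      linear_combination -hf
    have heven : Even k ↔ (x.2 = y.2) := by
      constructor
      · intro he
        have hz : (k : ZMod 2) = 0 := by
          obtain ⟨m, hm⟩ := he
          exact (ZMod.natCast_eq_zero_iff k 2).mpr ⟨m, by omega⟩
        rw [h2, h3] at hz
        cases hx : x.2 <;> cases hy : y.2 <;> simp_all <;> exact absurd hz (by decide)
      · intro he
        have h4 : (k : ZMod 2) = 0 := by
          rw [h2, h3, he]; ring
        obtain ⟨m, hm⟩ := (ZMod.natCast_eq_zero_iff k 2).mp h4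
        exact ⟨m, by omega⟩
    refine ⟨k, Or.inl ?_⟩
    rw [iterate_coverSucc, h1]
    have hfst : x.1 + (y.1 - x.1) = y.1 := by ring
    rcases Nat.even_or_odd k with he | ho
    · have hb : x.2 = y.2 := heven.mp he
      rw [if_pos he, hfst, hb]
    · have hbne : ¬ (x.2 = y.2) := fun hc => (Nat.not_even_iff_odd.mpr ho) (heven.mpr hc)
      have hb : (!x.2) = y.2 := by
        cases hx : x.2 <;> cases hy : y.2
        · exact absurd (hx.trans hy.symm) hbne
        · rfl
        · rfl
        · exact absurd (hx.trans hy.symm) hbne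
      rw [if_neg (Nat.not_even_iff_odd.mpr ho), hfst, hb]

/-- Let `G` be the Gauss diagram of a virtual knot diagram with a set
`P = {p_1, …, p_{2n}}` of `2n` points (`n ≥ 1`).  The double-covering
replacement (gluing `G` and its mirror `G*` crosswise at each pair of
corresponding points) yields a Gauss diagram with exactly two circles;
moreover, if the arc `A_i` lies on one circle, then the next arc `A_{i+1}`
and the mirror arc `A_i*` lie on the other circle. -/
theorem doubleCover_two_components (n : ℕ) (hn : 1 ≤ n) :
    (∃ x y : ZMod (2 * n) × Bool, ¬ SameComp n x y ∧
      ∀ z : ZMod (2 * n) × Bool, SameComp n z x ∨ SameComp n z y) ∧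
    (∀ (i : ZMod (2 * n)) (b : Bool),
      ¬ SameComp n (i, b) (i + 1, b) ∧ ¬ SameComp n (i, b) (i, !b)) := by
  have htwo : ∀ a : ZMod 2, a = 0 ∨ a = 1 := by decide
  have hf0 : fInv n (0, false) = 0 := by simp [fInv]
  have hf1 : fInv n (0, true) = 1 := by simp [fInv]
  constructor
  · refine ⟨(0, false), (0, true), ?_, ?_⟩
    · rw [sameComp_iff n hn, hf0, hf1]
      decide
    · intro z
      rcases htwo (fInv n z) with h | h
      · left; rw [sameComp_iff n hn, hf0, h]
      · right; rw [sameComp_iff n hn, hf1, h]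
  · intro i b
    constructor
    · rw [sameComp_iff n hn]
      simp only [fInv, map_add, map_one]
      intro hc
      have h1 : (1 : ZMod 2) = 0 := by linear_combination -hc
      exact absurd h1 (by decide)
    · rw [sameComp_iff n hn]
      simp only [fInv]
      intro hc
      have h1 : (1 : ZMod 2) = 0 := by
        cases b <;> simpa using hc.symm
      exact absurd h1 (by decide)
end

section
/- If D is a virtual knot diagram admitting an empty cut system (i.e., D is normal/checkerboard colorable), then D has no odd crossings, and hence its odd writhe is zero. -/
open scoped Classical

/-- Cyclic strict strict betweenness on `ZMod N`: `x` lies strictly between `a`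
and `b` on the arc from `a` to `b` in the positive direction. -/
def strictBtw {N : ℕ} (a b x : ZMod N) : Prop :=
  (x - a).val < (b - a).val ∧ x ≠ a

/-- A chord is odd if the arc from its tail to its head contains an odd number
of chord endpoints. -/
def IsOddChord {N : ℕ} (E : Finset (ZMod N)) (c : ZMod N × ZMod N) : Prop :=
  Odd ((E.filter (fun x => strictBtw c.1 c.2 x)).card)

lemma eps_telescope {N : ℕ} [NeZero N] (E : Finset (ZMod N)) (ε : ZMod N → ZMod 2)
    (hε : ∀ x : ZMod N, ε (x + 1) = ε x + (if x + 1 ∈ E then 1 else 0))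
    (a : ZMod N) (k : ℕ) :
    ε (a + (k : ZMod N)) = ε a + ∑ j ∈ Finset.range k,
      (if a + ((j + 1 : ℕ) : ZMod N) ∈ E then (1 : ZMod 2) else 0) := by
  induction k with
  | zero => simp
  | succ k ih =>
    have h1 : a + ((k + 1 : ℕ) : ZMod N) = (a + (k : ZMod N)) + 1 := by push_cast; ring
    rw [h1, hε, ih, Finset.sum_range_succ, ← h1]
    ring

/-- If a virtual knot diagram `D` admits the empty cut system — i.e. `D` is
normal (checkerboard colorable), so that it carries an alternate orientation
with no cut points (labels of the Gauss circle flipping exactly at the chord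
endpoints, the two endpoints of each chord being oppositely labelled) — then
`D` has no odd crossings, hence its odd writhe is zero. -/
theorem normal_implies_no_oddCrossings_and_oddWrithe_zero {N : ℕ} [NeZero N]
    (chords : Finset (ZMod N × ZMod N)) (E : Finset (ZMod N))
    (sgn : ZMod N × ZMod N → ℤ)
    (hE : E = chords.image Prod.fst ∪ chords.image Prod.snd)
    (hproper : ∀ c ∈ chords, c.1 ≠ c.2)
    (hdistinct : E.card = 2 * chords.card)
    (hnormal : ∃ ε : ZMod N → ZMod 2,
      (∀ x : ZMod N, ε (x + 1) = ε x + (if x + 1 ∈ E then 1 else 0)) ∧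
      (∀ c ∈ chords, ε c.1 ≠ ε c.2)) :
    (∀ c ∈ chords, ¬ IsOddChord E c) ∧
    (∑ c ∈ chords, if IsOddChord E c then sgn c else 0 : ℤ) = 0 := by
  obtain ⟨ε, hε, hflip⟩ := hnormal
  have key : ∀ c ∈ chords, ¬ IsOddChord E c := by
    intro c hc
    set a := c.1 with ha
    set b := c.2 with hb
    have hab : a ≠ b := hproper c hc
    have hbE : b ∈ E := by
      rw [hE]
      exact Finset.mem_union_right _ (Finset.mem_image.2 ⟨c, hc, rfl⟩)
    set k := (b - a).val with hk
    have hk0 : k ≠ 0 := by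
      simp only [hk, ne_eq, ZMod.val_eq_zero, sub_eq_zero]
      exact fun h => hab h.symm
    have hkN : k < N := ZMod.val_lt _
    have hbk : a + (k : ZMod N) = b := by
      rw [hk, ZMod.natCast_val, ZMod.cast_id]; ring
    -- parity of E-points on the half-open arc (a, b]
    have htel := eps_telescope E ε hε a k
    rw [hbk] at htel
    set P : ℕ → Prop := fun j => a + ((j + 1 : ℕ) : ZMod N) ∈ E with hP
    have hsumcard : (∑ j ∈ Finset.range k,
        (if a + ((j + 1 : ℕ) : ZMod N) ∈ E then (1 : ZMod 2) else 0)) =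
        (((Finset.range k).filter P).card : ZMod 2) := by
      rw [Finset.sum_boole]
    have hne : ε a ≠ ε b := hflip c hc
    have hcast1 : (((Finset.range k).filter P).card : ZMod 2) ≠ 0 := by
      intro h0
      rw [hsumcard, h0, add_zero] at htel
      exact hne htel.symm
    have hodd : Odd ((Finset.range k).filter P).card := by
      rcases Nat.even_or_odd ((Finset.range k).filter P).card with h | h
      · exact absurd ((ZMod.natCast_eq_zero_iff _ 2).2 h.two_dvd) hcast1
      · exact h
    -- split off the top point j = k - 1, which maps to b ∈ E
    have hk1 : k - 1 + 1 = k := Nat.succ_pred_eq_of_pos (Nat.pos_of_ne_zero hk0)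
    have hPtop : P (k - 1) := by
      simp only [hP, hk1]
      rw [hbk]; exact hbE
    have hsplit : (Finset.range k).filter P =
        insert (k - 1) ((Finset.range (k - 1)).filter P) := by
      ext j
      simp only [Finset.mem_insert, Finset.mem_filter, Finset.mem_range]
      constructor
      · rintro ⟨hj, hPj⟩
        rcases eq_or_lt_of_le (Nat.le_pred_of_lt hj) with h | h
        · exact Or.inl h
        · exact Or.inr ⟨h, hPj⟩
      · rintro (rfl | ⟨hj, hPj⟩)
        · exact ⟨by omega, hPtop⟩
        · exact ⟨by omega, hPj⟩
    have hnotmem : k - 1 ∉ (Finset.range (k - 1)).filter P := by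
      simp [Finset.mem_filter]
    have hcard : ((Finset.range k).filter P).card =
        ((Finset.range (k - 1)).filter P).card + 1 := by
      rw [hsplit, Finset.card_insert_of_notMem hnotmem]
    -- bijection between strict arc points in E and indices in range (k-1)
    have hbij : (E.filter (fun x => strictBtw a b x)).card =
        ((Finset.range (k - 1)).filter P).card := by
      apply Finset.card_bij (fun x _ => (x - a).val - 1)
      · intro x hx
        simp only [Finset.mem_filter] at hx ⊢
        obtain ⟨hxE, hlt, hxa⟩ := hx
        have hv0 : (x - a).val ≠ 0 := by
          simp only [ne_eq, ZMod.val_eq_zero, sub_eq_zero]; exact hxa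
        refine ⟨Finset.mem_range.2 (by omega), ?_⟩
        simp only [hP]
        have : (x - a).val - 1 + 1 = (x - a).val := by omega
        rw [this, ZMod.natCast_val, ZMod.cast_id]
        simpa using hxE
      · intro x hx y hy hxy
        simp only [Finset.mem_filter] at hx hy
        have hx0 : (x - a).val ≠ 0 := by
          simp only [ne_eq, ZMod.val_eq_zero, sub_eq_zero]; exact hx.2.2
        have hy0 : (y - a).val ≠ 0 := by
          simp only [ne_eq, ZMod.val_eq_zero, sub_eq_zero]; exact hy.2.2
        have hv : (x - a).val = (y - a).val := by omega
        have : x - a = y - a := by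
          have := congrArg (fun n : ℕ => (n : ZMod N)) hv
          simpa [ZMod.natCast_val, ZMod.cast_id] using this
        linear_combination this
      · intro j hj
        simp only [Finset.mem_filter, Finset.mem_range, hP] at hj
        obtain ⟨hjlt, hjE⟩ := hj
        refine ⟨a + ((j + 1 : ℕ) : ZMod N), ?_, ?_⟩
        · have hval : ((a + ((j + 1 : ℕ) : ZMod N)) - a).val = j + 1 := by
            have : (a + ((j + 1 : ℕ) : ZMod N)) - a = ((j + 1 : ℕ) : ZMod N) := by ring
            rw [this, ZMod.val_natCast_of_lt (by omega)]
          simp only [Finset.mem_filter]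
          refine ⟨hjE, ⟨by rw [hval]; omega, ?_⟩⟩
          intro hxa
          rw [hxa] at hval
          simp at hval
        · have : (a + ((j + 1 : ℕ) : ZMod N)) - a = ((j + 1 : ℕ) : ZMod N) := by ring
          rw [this, ZMod.val_natCast_of_lt (by omega)]
          omega
    intro hoddchord
    simp only [IsOddChord] at hoddchord
    have hodd' : Odd ((E.filter (fun x => strictBtw a b x)).card + 1) := by
      rw [← hbij] at hcard
      rw [← hcard]
      exact hodd
    have heven := Nat.odd_add_one.mp hodd'
    exact heven hoddchord
  refine ⟨key, ?_⟩
  apply Finset.sum_eq_zero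
  intro c hc
  rw [if_neg (key c hc)]
end
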